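/- arXiv:1906.01013 — 2 statements merged into one kernel-verified Lean document; each statement's English description precedes it below -/
import Mathlib

section
/- Let n ∈ ℕ, let φ_1, …, φ_n be nondegenerate Orlicz functions, let θ_1, …, θ_n > 0 with ∑_j θ_j = 1, and let φ_z be a nondegenerate Orlicz function satisfying φ_z^{-1}(s) = ∏_{j=1}^n (φ_j^{-1}(s))^{θ_j} for all s ≥ 0. Then the set P = {x ∈ ℂ^ℕ : there exist x_j ∈ ℓ_{φ_j} with |x(k)| = ∏_{j=1}^n |x_j(k)|^{θ_j} for all k} equals ℓ_{φ_z} as a set, and moreover there is a constant C > 0 (depending only on n) such that for every x ∈ ℓ_{φ_z}: inf{∏_{j=1}^n ‖x_j‖_{ℓ_{φ_j}}^{θ_j} : |x| = ∏_j |x_j|^{θ_j}, x_j ∈ ℓ_{φ_j}} ≤ ‖x‖_{ℓ_{φ_z}} ≤ C · inf{∏_{j=1}^n ‖x_j‖_{ℓ_{φ_j}}^{θ_j} : |x| = ∏_j |x_j|^{θ_j}, x_j ∈ ℓ_{φ_j}}. -/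
/-!
Two pointwise facts about `φz⁻¹ = ∏ (φⱼ⁻¹)^θⱼ` drive everything. First, the Young-type inequality
`φz (∏ tⱼ^θⱼ) ≤ ∑ φⱼ tⱼ`, because each `tⱼ ≤ φⱼ⁻¹ (∑ φᵢ tᵢ)`; together with `φz (t / n) ≤ φz t / n`
it shows that if the `xⱼ` have modular at most `1` at `ρⱼ`, then `x` has modular at most `1` at
`n ∏ ρⱼ^θⱼ`, whence `ℓ_{φⱼ}`-products lie in `ℓ_{φz}` and `‖x‖ ≤ n ∏ ‖xⱼ‖^θⱼ`. Second, every
`u ≥ 0` factors as `∏ tⱼ^θⱼ` with `φⱼ tⱼ ≤ φz u`: scale the point `(φⱼ⁻¹ (φz u))ⱼ`, whose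
geometric mean is `φz⁻¹ (φz u) ≥ u`, down to geometric mean `u`. Applied coordinatewise at any
`ρ`, this factors `x` into `xⱼ` whose modulars at `ρ` are bounded by that of `x`, which gives
the reverse inclusion and `inf ∏ ‖xⱼ‖^θⱼ ≤ ‖x‖`.
-/

open MeasureTheory Real Set Filter
open scoped ENNReal

noncomputable section

/-- An Orlicz function: convex, nondecreasing and nonnegative on `[0,∞)`, vanishing at
`0` and tending to `∞` at `∞`. -/
def IsOrliczFunction (φ : ℝ → ℝ) : Prop :=
  ConvexOn ℝ (Set.Ici 0) φ ∧ MonotoneOn φ (Set.Ici 0) ∧ φ 0 = 0 ∧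
    (∀ t, 0 ≤ t → 0 ≤ φ t) ∧ Filter.Tendsto φ Filter.atTop Filter.atTop

/-- Nondegenerate: positive for positive arguments. -/
def IsNondegenerate (φ : ℝ → ℝ) : Prop := ∀ t, 0 < t → 0 < φ t

/-- The generalized inverse `φ⁻¹(s) = sup {t ≥ 0 : φ t ≤ s}`. -/
def ginv (φ : ℝ → ℝ) (s : ℝ) : ℝ := sSup {t : ℝ | 0 ≤ t ∧ φ t ≤ s}

/-- Membership in the Orlicz sequence space `ℓ_φ`. -/
def MemOrlicz (φ : ℝ → ℝ) (x : ℕ → ℂ) : Prop :=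
  ∃ ρ : ℝ, 0 < ρ ∧ (∑' n, ENNReal.ofReal (φ (‖x n‖ / ρ))) < ⊤

/-- The Luxemburg norm of `x` in `ℓ_φ`, with values in `[0,∞]`
(`inf ∅ = ∞`, i.e. the norm is `∞` when `x ∉ ℓ_φ`). -/
def luxNorm (φ : ℝ → ℝ) (x : ℕ → ℂ) : ℝ≥0∞ :=
  sInf {p : ℝ≥0∞ | ∃ ρ : ℝ, 0 < ρ ∧ p = ENNReal.ofReal ρ ∧
    (∑' n, ENNReal.ofReal (φ (‖x n‖ / ρ))) ≤ 1}

/-- The set of products `∏_j ‖x_j‖_{ℓ_{φ_j}}^{θ_j}` over all factorizations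
`|x| = ∏_j |x_j|^{θ_j}` with `x_j ∈ ℓ_{φ_j}`. -/
def factorizationSet {n : ℕ} (φ : Fin n → ℝ → ℝ) (θ : Fin n → ℝ) (x : ℕ → ℂ) :
    Set ℝ≥0∞ :=
  {c : ℝ≥0∞ | ∃ xs : Fin n → (ℕ → ℂ), (∀ j, MemOrlicz (φ j) (xs j)) ∧
    (∀ k : ℕ, ‖x k‖ = ∏ j, ‖xs j k‖ ^ θ j) ∧
    c = ∏ j, luxNorm (φ j) (xs j) ^ θ j}

open scoped Topology

theorem IsOrliczFunction.convexOn {φ : ℝ → ℝ} (hφ : IsOrliczFunction φ) :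
    ConvexOn ℝ (Ici 0) φ := hφ.1

theorem IsOrliczFunction.monotoneOn {φ : ℝ → ℝ} (hφ : IsOrliczFunction φ) :
    MonotoneOn φ (Ici 0) := hφ.2.1

theorem IsOrliczFunction.map_zero {φ : ℝ → ℝ} (hφ : IsOrliczFunction φ) : φ 0 = 0 := hφ.2.2.1

theorem IsOrliczFunction.nonneg {φ : ℝ → ℝ} (hφ : IsOrliczFunction φ) {t : ℝ} (ht : 0 ≤ t) :
    0 ≤ φ t := hφ.2.2.2.1 t ht

theorem IsOrliczFunction.tendsto_atTop {φ : ℝ → ℝ} (hφ : IsOrliczFunction φ) :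
    Tendsto φ atTop atTop := hφ.2.2.2.2

namespace IsOrliczFunction

variable {φ : ℝ → ℝ} {s t l : ℝ}

theorem map_mul_le (hφ : IsOrliczFunction φ) (ht : 0 ≤ t) (hl₀ : 0 ≤ l) (hl₁ : l ≤ 1) :
    φ (l * t) ≤ l * φ t := by
  simpa [hφ.map_zero] using
    hφ.convexOn.2 (mem_Ici.2 ht) self_mem_Ici hl₀ (sub_nonneg.2 hl₁) (add_sub_cancel l 1)

theorem bddAbove_sublevel (hφ : IsOrliczFunction φ) (s : ℝ) :
    BddAbove {t : ℝ | 0 ≤ t ∧ φ t ≤ s} := by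
  obtain ⟨T, hT⟩ := (Filter.tendsto_atTop.1 hφ.tendsto_atTop (s + 1)).exists_forall_of_atTop
  refine ⟨T, fun t ht => not_lt.1 fun hTt => ?_⟩
  linarith [hT t hTt.le, ht.2]

theorem le_ginv (hφ : IsOrliczFunction φ) (ht : 0 ≤ t) (h : φ t ≤ s) : t ≤ ginv φ s :=
  le_csSup (hφ.bddAbove_sublevel s) ⟨ht, h⟩

theorem ginv_nonneg (hφ : IsOrliczFunction φ) (hs : 0 ≤ s) : 0 ≤ ginv φ s :=
  hφ.le_ginv le_rfl (hφ.map_zero.trans_le hs)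

/-- The supremum defining `ginv φ s` is attained, because `φ` is continuous on `(0, ∞)`. -/
theorem map_ginv_le (hφ : IsOrliczFunction φ) (hs : 0 ≤ s) : φ (ginv φ s) ≤ s := by
  rcases (hφ.ginv_nonneg hs).eq_or_lt with h₀ | hpos
  · rwa [← h₀, hφ.map_zero]
  have hcont : ContinuousAt φ (ginv φ s) :=
    ((hφ.convexOn.subset Ioi_subset_Ici_self (convex_Ioi 0)).continuousOn isOpen_Ioi).continuousAt
      (isOpen_Ioi.mem_nhds hpos)
  have : (𝓝[Ioo 0 (ginv φ s)] ginv φ s).NeBot := right_nhdsWithin_Ioo_neBot hpos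
  refine le_of_tendsto (x := 𝓝[Ioo 0 (ginv φ s)] ginv φ s) hcont.continuousWithinAt.tendsto ?_
  filter_upwards [self_mem_nhdsWithin] with t ht
  obtain ⟨u, hu, htu⟩ := exists_lt_of_lt_csSup (s := {t : ℝ | 0 ≤ t ∧ φ t ≤ s})
    ⟨0, le_rfl, hφ.map_zero.trans_le hs⟩ ht.2
  exact (hφ.monotoneOn (mem_Ici.2 ht.1.le) (mem_Ici.2 hu.1) htu.le).trans hu.2

end IsOrliczFunction

theorem ENNReal.prod_ofReal_rpow_of_nonneg {ι : Type*} (s : Finset ι) {a θ : ι → ℝ}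
    (ha : ∀ i, 0 ≤ a i) (hθ : ∀ i, 0 ≤ θ i) :
    ∏ i ∈ s, ENNReal.ofReal (a i) ^ θ i = ENNReal.ofReal (∏ i ∈ s, a i ^ θ i) := by
  rw [ENNReal.ofReal_prod_of_nonneg fun i _ => Real.rpow_nonneg (ha i) _]
  exact Finset.prod_congr rfl fun i _ => ENNReal.ofReal_rpow_of_nonneg (ha i) (hθ i)

def orliczModular (φ : ℝ → ℝ) (x : ℕ → ℂ) (ρ : ℝ) : ℝ≥0∞ :=
  ∑' k, ENNReal.ofReal (φ (‖x k‖ / ρ))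

section Modular

variable {φ : ℝ → ℝ} {x : ℕ → ℂ} {ρ ρ' : ℝ}

theorem luxNorm_le_ofReal (hρ : 0 < ρ) (h : orliczModular φ x ρ ≤ 1) :
    luxNorm φ x ≤ ENNReal.ofReal ρ :=
  sInf_le ⟨ρ, hρ, rfl, h⟩

theorem orliczModular_anti (hφ : IsOrliczFunction φ) (hρ : 0 < ρ) (hρρ' : ρ ≤ ρ') :
    orliczModular φ x ρ' ≤ orliczModular φ x ρ :=
  ENNReal.tsum_le_tsum fun _ => ENNReal.ofReal_le_ofReal <|
    hφ.monotoneOn (mem_Ici.2 (div_nonneg (norm_nonneg _) (hρ.le.trans hρρ')))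
      (mem_Ici.2 (div_nonneg (norm_nonneg _) hρ.le))
      (div_le_div_of_nonneg_left (norm_nonneg _) hρ hρρ')

theorem orliczModular_le_one_of_luxNorm_lt (hφ : IsOrliczFunction φ)
    (h : luxNorm φ x < ENNReal.ofReal ρ) : orliczModular φ x ρ ≤ 1 := by
  obtain ⟨_, ⟨ρ', hρ', rfl, hle⟩, hlt⟩ := sInf_lt_iff.1 h
  exact (orliczModular_anti hφ hρ' (ENNReal.ofReal_lt_ofReal_iff'.1 hlt).1.le).trans hle

theorem orliczModular_mul_le (hφ : IsOrliczFunction φ) (hρ : 0 < ρ) {m : ℝ} (hm : 1 ≤ m) :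
    orliczModular φ x (m * ρ) ≤ ENNReal.ofReal m⁻¹ * orliczModular φ x ρ := by
  rw [orliczModular, orliczModular, ← ENNReal.tsum_mul_left]
  have hm₀ : 0 ≤ m⁻¹ := inv_nonneg.2 (zero_le_one.trans hm)
  refine ENNReal.tsum_le_tsum fun k => ?_
  rw [← ENNReal.ofReal_mul hm₀, mul_comm m, ← div_div, div_eq_inv_mul _ m]
  exact ENNReal.ofReal_le_ofReal <|
    hφ.map_mul_le (by positivity) hm₀ (inv_le_one_of_one_le₀ hm)

theorem luxNorm_lt_top (hφ : IsOrliczFunction φ) (hx : MemOrlicz φ x) : luxNorm φ x < ⊤ := by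
  obtain ⟨ρ, hρ, hfin⟩ : ∃ ρ, 0 < ρ ∧ orliczModular φ x ρ < ⊤ := hx
  set m := (orliczModular φ x ρ).toReal + 1
  have hm : 1 ≤ m := le_add_of_nonneg_left ENNReal.toReal_nonneg
  have hm₀ : 0 < m := zero_lt_one.trans_le hm
  refine (luxNorm_le_ofReal (ρ := m * ρ) (by positivity) ?_).trans_lt ENNReal.ofReal_lt_top
  calc orliczModular φ x (m * ρ) ≤ ENNReal.ofReal m⁻¹ * orliczModular φ x ρ :=
        orliczModular_mul_le hφ hρ hm
    _ ≤ ENNReal.ofReal m⁻¹ * ENNReal.ofReal m := by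
        gcongr
        rw [← ENNReal.ofReal_toReal hfin.ne]
        exact ENNReal.ofReal_le_ofReal (le_add_of_nonneg_right zero_le_one)
    _ = 1 := by
        rw [← ENNReal.ofReal_mul (by positivity), inv_mul_cancel₀ (by positivity),
          ENNReal.ofReal_one]

end Modular

section Interpolation

variable {n : ℕ} {φ : Fin n → ℝ → ℝ} {θ : Fin n → ℝ} {φz : ℝ → ℝ}

theorem map_prod_rpow_le_sum (hφ : ∀ j, IsOrliczFunction (φ j)) (hθ : ∀ j, 0 ≤ θ j)
    (hφz : IsOrliczFunction φz) (hinv : ∀ s, 0 ≤ s → ginv φz s = ∏ j, ginv (φ j) s ^ θ j)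
    {t : Fin n → ℝ} (ht : ∀ j, 0 ≤ t j) : φz (∏ j, t j ^ θ j) ≤ ∑ j, φ j (t j) := by
  set s := ∑ j, φ j (t j)
  have hs : 0 ≤ s := Finset.sum_nonneg fun j _ => (hφ j).nonneg (ht j)
  have ht_le : ∀ j, t j ≤ ginv (φ j) s := fun j => (hφ j).le_ginv (ht j)
    (Finset.single_le_sum (fun i _ => (hφ i).nonneg (ht i)) (Finset.mem_univ j))
  have hprod : ∏ j, t j ^ θ j ≤ ginv φz s := by
    rw [hinv s hs]
    exact Finset.prod_le_prod (fun j _ => Real.rpow_nonneg (ht j) _)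
      fun j _ => Real.rpow_le_rpow (ht j) (ht_le j) (hθ j)
  calc φz (∏ j, t j ^ θ j) ≤ φz (ginv φz s) :=
        hφz.monotoneOn (mem_Ici.2 (Finset.prod_nonneg fun j _ => Real.rpow_nonneg (ht j) _))
          (mem_Ici.2 (hφz.ginv_nonneg hs)) hprod
    _ ≤ s := hφz.map_ginv_le hs

theorem exists_prod_rpow_eq (hφ : ∀ j, IsOrliczFunction (φ j)) (hθ : ∀ j, 0 ≤ θ j)
    (hθsum : ∑ j, θ j = 1) (hφz : IsOrliczFunction φz)
    (hinv : ∀ s, 0 ≤ s → ginv φz s = ∏ j, ginv (φ j) s ^ θ j) {u : ℝ} (hu : 0 ≤ u) :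
    ∃ t : Fin n → ℝ, (∀ j, 0 ≤ t j) ∧ ∏ j, t j ^ θ j = u ∧ ∀ j, φ j (t j) ≤ φz u := by
  set s := φz u
  have hs : 0 ≤ s := hφz.nonneg hu
  set G := ginv φz s
  have huG : u ≤ G := hφz.le_ginv hu le_rfl
  have hc₀ : 0 ≤ u / G := div_nonneg hu (hu.trans huG)
  have hc₁ : u / G ≤ 1 := div_le_one_of_le₀ huG (hu.trans huG)
  have hg : ∀ j, 0 ≤ ginv (φ j) s := fun j => (hφ j).ginv_nonneg hs
  refine ⟨fun j => u / G * ginv (φ j) s, fun j => mul_nonneg hc₀ (hg j), ?_, fun j => ?_⟩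
  · calc ∏ j, (u / G * ginv (φ j) s) ^ θ j = (u / G) ^ (∑ j, θ j) * ∏ j, ginv (φ j) s ^ θ j := by
          rw [Real.rpow_sum_of_nonneg hc₀ fun j _ => hθ j, ← Finset.prod_mul_distrib]
          exact Finset.prod_congr rfl fun j _ => Real.mul_rpow hc₀ (hg j)
      _ = u := by
          rw [hθsum, Real.rpow_one, ← hinv s hs]
          exact div_mul_cancel_of_imp fun hG => le_antisymm (hG ▸ huG) hu
  · calc φ j (u / G * ginv (φ j) s) ≤ u / G * φ j (ginv (φ j) s) :=
          (hφ j).map_mul_le (hg j) hc₀ hc₁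
      _ ≤ φ j (ginv (φ j) s) := mul_le_of_le_one_left ((hφ j).nonneg (hg j)) hc₁
      _ ≤ s := (hφ j).map_ginv_le hs

theorem exists_factorization_orliczModular_le (hφ : ∀ j, IsOrliczFunction (φ j))
    (hθ : ∀ j, 0 ≤ θ j) (hθsum : ∑ j, θ j = 1) (hφz : IsOrliczFunction φz)
    (hinv : ∀ s, 0 ≤ s → ginv φz s = ∏ j, ginv (φ j) s ^ θ j) (x : ℕ → ℂ) {ρ : ℝ} (hρ : 0 < ρ) :
    ∃ xs : Fin n → ℕ → ℂ, (∀ k, ‖x k‖ = ∏ j, ‖xs j k‖ ^ θ j) ∧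
      ∀ j, orliczModular (φ j) (xs j) ρ ≤ orliczModular φz x ρ := by
  choose t ht_nonneg ht_prod ht_le using fun k =>
    exists_prod_rpow_eq hφ hθ hθsum hφz hinv (u := ‖x k‖ / ρ) (by positivity)
  have hnorm : ∀ j k, ‖((ρ * t k j : ℝ) : ℂ)‖ = ρ * t k j := fun j k => by
    rw [Complex.norm_real, Real.norm_of_nonneg (mul_nonneg hρ.le (ht_nonneg k j))]
  refine ⟨fun j k => ((ρ * t k j : ℝ) : ℂ), fun k => ?_,
    fun j => ENNReal.tsum_le_tsum fun k => ENNReal.ofReal_le_ofReal ?_⟩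
  · calc ‖x k‖ = ρ ^ (∑ j, θ j) * ∏ j, t k j ^ θ j := by
          rw [hθsum, Real.rpow_one, ht_prod, mul_div_cancel₀ _ hρ.ne']
      _ = ∏ j, ‖((ρ * t k j : ℝ) : ℂ)‖ ^ θ j := by
          rw [Real.rpow_sum_of_pos hρ, ← Finset.prod_mul_distrib]
          exact Finset.prod_congr rfl fun j _ => by
            rw [hnorm, Real.mul_rpow hρ.le (ht_nonneg k j)]
  · rw [hnorm, mul_div_cancel_left₀ _ hρ.ne']
    exact ht_le k j

theorem orliczModular_le_of_factorization (hn : 0 < n) (hφ : ∀ j, IsOrliczFunction (φ j))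
    (hθ : ∀ j, 0 ≤ θ j) (hφz : IsOrliczFunction φz)
    (hinv : ∀ s, 0 ≤ s → ginv φz s = ∏ j, ginv (φ j) s ^ θ j) {x : ℕ → ℂ}
    {xs : Fin n → ℕ → ℂ} (hx : ∀ k, ‖x k‖ = ∏ j, ‖xs j k‖ ^ θ j) {ρ : Fin n → ℝ}
    (hρ : ∀ j, 0 < ρ j) :
    orliczModular φz x (n * ∏ j, ρ j ^ θ j) ≤
      (n : ℝ≥0∞)⁻¹ * ∑ j, orliczModular (φ j) (xs j) (ρ j) := by
  have hn' : (0 : ℝ) < n := Nat.cast_pos.2 hn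
  have hpoint : ∀ k, φz (‖x k‖ / (n * ∏ j, ρ j ^ θ j)) ≤
      (n : ℝ)⁻¹ * ∑ j, φ j (‖xs j k‖ / ρ j) := by
    intro k
    have hy : ∀ j, 0 ≤ ‖xs j k‖ / ρ j := fun j => div_nonneg (norm_nonneg _) (hρ j).le
    have harg : ‖x k‖ / (n * ∏ j, ρ j ^ θ j) = (n : ℝ)⁻¹ * ∏ j, (‖xs j k‖ / ρ j) ^ θ j := by
      rw [hx k, Finset.prod_congr rfl fun j _ => Real.div_rpow (norm_nonneg _) (hρ j).le (θ j),
        Finset.prod_div_distrib]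
      ring
    rw [harg]
    calc φz ((n : ℝ)⁻¹ * ∏ j, (‖xs j k‖ / ρ j) ^ θ j)
        ≤ (n : ℝ)⁻¹ * φz (∏ j, (‖xs j k‖ / ρ j) ^ θ j) :=
          hφz.map_mul_le (Finset.prod_nonneg fun j _ => Real.rpow_nonneg (hy j) _)
            (by positivity) (inv_le_one_of_one_le₀ (Nat.one_le_cast.2 hn))
      _ ≤ (n : ℝ)⁻¹ * ∑ j, φ j (‖xs j k‖ / ρ j) :=
          mul_le_mul_of_nonneg_left (map_prod_rpow_le_sum hφ hθ hφz hinv hy) (by positivity)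
  calc orliczModular φz x (n * ∏ j, ρ j ^ θ j)
      ≤ ∑' k, ENNReal.ofReal ((n : ℝ)⁻¹ * ∑ j, φ j (‖xs j k‖ / ρ j)) :=
        ENNReal.tsum_le_tsum fun k => ENNReal.ofReal_le_ofReal (hpoint k)
    _ = ∑' k, (n : ℝ≥0∞)⁻¹ * ∑ j, ENNReal.ofReal (φ j (‖xs j k‖ / ρ j)) := by
        refine tsum_congr fun k => ?_
        rw [ENNReal.ofReal_mul (by positivity), ENNReal.ofReal_inv_of_pos hn',
          ENNReal.ofReal_natCast,
          ENNReal.ofReal_sum_of_nonneg fun j _ =>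
            (hφ j).nonneg (div_nonneg (norm_nonneg _) (hρ j).le)]
    _ = (n : ℝ≥0∞)⁻¹ * ∑ j, orliczModular (φ j) (xs j) (ρ j) := by
        rw [ENNReal.tsum_mul_left, Summable.tsum_finsetSum fun j _ => ENNReal.summable]
        rfl

theorem memOrlicz_of_factorization (hn : 0 < n) (hφ : ∀ j, IsOrliczFunction (φ j))
    (hθ : ∀ j, 0 ≤ θ j) (hφz : IsOrliczFunction φz)
    (hinv : ∀ s, 0 ≤ s → ginv φz s = ∏ j, ginv (φ j) s ^ θ j) {x : ℕ → ℂ}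
    {xs : Fin n → ℕ → ℂ} (hxs : ∀ j, MemOrlicz (φ j) (xs j))
    (hx : ∀ k, ‖x k‖ = ∏ j, ‖xs j k‖ ^ θ j) : MemOrlicz φz x := by
  choose ρ hρ hfin using hxs
  refine ⟨n * ∏ j, ρ j ^ θ j,
    mul_pos (Nat.cast_pos.2 hn) (Finset.prod_pos fun j _ => Real.rpow_pos_of_pos (hρ j) _),
    (orliczModular_le_of_factorization hn hφ hθ hφz hinv hx hρ).trans_lt ?_⟩
  exact ENNReal.mul_lt_top (ENNReal.inv_lt_top.2 (Nat.cast_pos.2 hn))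
    (ENNReal.sum_lt_top.2 fun j _ => hfin j)

theorem luxNorm_le_natCast_mul_prod (hn : 0 < n) (hφ : ∀ j, IsOrliczFunction (φ j))
    (hθ : ∀ j, 0 < θ j) (hφz : IsOrliczFunction φz)
    (hinv : ∀ s, 0 ≤ s → ginv φz s = ∏ j, ginv (φ j) s ^ θ j) {x : ℕ → ℂ}
    {xs : Fin n → ℕ → ℂ} (hxs : ∀ j, MemOrlicz (φ j) (xs j))
    (hx : ∀ k, ‖x k‖ = ∏ j, ‖xs j k‖ ^ θ j) :
    luxNorm φz x ≤ n * ∏ j, luxNorm (φ j) (xs j) ^ θ j := by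
  set l : Fin n → ℝ := fun j => (luxNorm (φ j) (xs j)).toReal
  have hl : ∀ j, ENNReal.ofReal (l j) = luxNorm (φ j) (xs j) := fun j =>
    ENNReal.ofReal_toReal (luxNorm_lt_top (hφ j) (hxs j)).ne
  -- every `ρ_j > ‖x_j‖` is admissible in the modular estimate; then let `ρ_j ↓ ‖x_j‖`
  have hbound : ∀ ε > 0, luxNorm φz x ≤ ENNReal.ofReal (n * ∏ j, (l j + ε) ^ θ j) := by
    intro ε hε
    have hρ : ∀ j, 0 < l j + ε := fun j => add_pos_of_nonneg_of_pos ENNReal.toReal_nonneg hε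
    have hmod : ∀ j, orliczModular (φ j) (xs j) (l j + ε) ≤ 1 := fun j =>
      orliczModular_le_one_of_luxNorm_lt (hφ j) <| by
        rw [← hl, ENNReal.ofReal_lt_ofReal_iff (hρ j)]
        exact lt_add_of_pos_right _ hε
    refine luxNorm_le_ofReal
      (mul_pos (Nat.cast_pos.2 hn) (Finset.prod_pos fun j _ => Real.rpow_pos_of_pos (hρ j) _))
      ((orliczModular_le_of_factorization hn hφ (fun j => (hθ j).le) hφz hinv hx hρ).trans ?_)
    calc (n : ℝ≥0∞)⁻¹ * ∑ j, orliczModular (φ j) (xs j) (l j + ε)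
        ≤ (n : ℝ≥0∞)⁻¹ * ∑ _j : Fin n, 1 := by gcongr with j; exact hmod j
      _ = 1 := by
        rw [Finset.sum_const, Finset.card_univ, Fintype.card_fin, nsmul_one,
          ENNReal.inv_mul_cancel (Nat.cast_ne_zero.2 hn.ne') (ENNReal.natCast_ne_top n)]
  have hcont : Continuous fun ε : ℝ => (n : ℝ) * ∏ j, (l j + ε) ^ θ j :=
    continuous_const.mul <| continuous_finsetProd _ fun j _ =>
      (Real.continuous_rpow_const (hθ j).le).comp (continuous_const.add continuous_id)
  have hlim : Tendsto (fun ε : ℝ => ENNReal.ofReal (n * ∏ j, (l j + ε) ^ θ j)) (𝓝[>] 0)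
      (𝓝 (ENNReal.ofReal (n * ∏ j, l j ^ θ j))) := by
    simpa only [Function.comp_def, add_zero] using
      ((ENNReal.continuous_ofReal.comp hcont).tendsto 0).mono_left (nhdsWithin_le_nhds (s := Ioi 0))
  calc luxNorm φz x ≤ ENNReal.ofReal (n * ∏ j, l j ^ θ j) :=
        ge_of_tendsto hlim (eventually_nhdsWithin_of_forall hbound)
    _ = n * ∏ j, luxNorm (φ j) (xs j) ^ θ j := by
        rw [ENNReal.ofReal_mul (Nat.cast_nonneg n), ENNReal.ofReal_natCast,
          ← ENNReal.prod_ofReal_rpow_of_nonneg (a := l) _ (fun j => ENNReal.toReal_nonneg)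
            fun j => (hθ j).le]
        simp_rw [hl]

theorem sInf_factorizationSet_le_luxNorm (hφ : ∀ j, IsOrliczFunction (φ j))
    (hθ : ∀ j, 0 ≤ θ j) (hθsum : ∑ j, θ j = 1) (hφz : IsOrliczFunction φz)
    (hinv : ∀ s, 0 ≤ s → ginv φz s = ∏ j, ginv (φ j) s ^ θ j) (x : ℕ → ℂ) :
    sInf (factorizationSet φ θ x) ≤ luxNorm φz x := by
  refine le_sInf ?_
  rintro _ ⟨ρ, hρ, rfl, hmod⟩
  obtain ⟨xs, hx, hxs⟩ := exists_factorization_orliczModular_le hφ hθ hθsum hφz hinv x hρ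
  have hxs₁ : ∀ j, orliczModular (φ j) (xs j) ρ ≤ 1 := fun j => (hxs j).trans hmod
  refine sInf_le_of_le ⟨xs, fun j => ⟨ρ, hρ, (hxs₁ j).trans_lt ENNReal.one_lt_top⟩, hx, rfl⟩ ?_
  calc ∏ j, luxNorm (φ j) (xs j) ^ θ j ≤ ∏ j, ENNReal.ofReal ρ ^ θ j :=
        Finset.prod_le_prod' fun j _ =>
          ENNReal.rpow_le_rpow (luxNorm_le_ofReal hρ (hxs₁ j)) (hθ j)
    _ = ENNReal.ofReal ρ := by
        rw [ENNReal.prod_ofReal_rpow_of_nonneg _ (fun _ => hρ.le) hθ,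
          ← Real.rpow_sum_of_pos hρ, hθsum, Real.rpow_one]

theorem luxNorm_le_natCast_mul_sInf_factorizationSet (hn : 0 < n)
    (hφ : ∀ j, IsOrliczFunction (φ j)) (hθ : ∀ j, 0 < θ j) (hφz : IsOrliczFunction φz)
    (hinv : ∀ s, 0 ≤ s → ginv φz s = ∏ j, ginv (φ j) s ^ θ j) (x : ℕ → ℂ) :
    luxNorm φz x ≤ n * sInf (factorizationSet φ θ x) := by
  have hn₀ : (n : ℝ≥0∞) ≠ 0 := Nat.cast_ne_zero.2 hn.ne'
  rw [mul_comm, ← ENNReal.div_le_iff hn₀ (ENNReal.natCast_ne_top n)]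
  refine le_sInf ?_
  rintro _ ⟨xs, hxs, hx, rfl⟩
  rw [ENNReal.div_le_iff hn₀ (ENNReal.natCast_ne_top n), mul_comm]
  exact luxNorm_le_natCast_mul_prod hn hφ hθ hφz hinv hxs hx

end Interpolation

/-- Lozanovskii-type factorization: if `φ_z⁻¹ = ∏_j (φ_j⁻¹)^{θ_j}` with `θ_j > 0`,
`∑ θ_j = 1`, then the set of products `{x : |x| = ∏ |x_j|^{θ_j}, x_j ∈ ℓ_{φ_j}}`
equals `ℓ_{φ_z}`, and the Luxemburg norm of `x ∈ ℓ_{φ_z}` is equivalent (with constant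
depending only on `n`) to the infimum of `∏_j ‖x_j‖^{θ_j}` over factorizations. -/
theorem statement8 (n : ℕ) (hn : 0 < n) (φ : Fin n → ℝ → ℝ)
    (hφ : ∀ j, IsOrliczFunction (φ j) ∧ IsNondegenerate (φ j))
    (θ : Fin n → ℝ) (hθpos : ∀ j, 0 < θ j) (hθsum : ∑ j, θ j = 1)
    (φz : ℝ → ℝ) (hφz : IsOrliczFunction φz ∧ IsNondegenerate φz)
    (hinv : ∀ s : ℝ, 0 ≤ s → ginv φz s = ∏ j, ginv (φ j) s ^ θ j) :
    ({x : ℕ → ℂ | ∃ xs : Fin n → (ℕ → ℂ), (∀ j, MemOrlicz (φ j) (xs j)) ∧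
        ∀ k : ℕ, ‖x k‖ = ∏ j, ‖xs j k‖ ^ θ j}
      = {x : ℕ → ℂ | MemOrlicz φz x}) ∧
    ∃ C : ℝ≥0∞, 0 < C ∧ C ≠ ⊤ ∧ ∀ x : ℕ → ℂ, MemOrlicz φz x →
      sInf (factorizationSet φ θ x) ≤ luxNorm φz x ∧
      luxNorm φz x ≤ C * sInf (factorizationSet φ θ x) := by
  have hφ' : ∀ j, IsOrliczFunction (φ j) := fun j => (hφ j).1
  have hθ : ∀ j, 0 ≤ θ j := fun j => (hθpos j).le
  refine ⟨Set.ext fun x => ⟨?_, ?_⟩, n, Nat.cast_pos.2 hn, ENNReal.natCast_ne_top n,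
    fun x _ => ⟨sInf_factorizationSet_le_luxNorm hφ' hθ hθsum hφz.1 hinv x,
      luxNorm_le_natCast_mul_sInf_factorizationSet hn hφ' hθpos hφz.1 hinv x⟩⟩
  · rintro ⟨xs, hxs, hx⟩
    exact memOrlicz_of_factorization hn hφ' hθ hφz.1 hinv hxs hx
  · rintro ⟨ρ, hρ, hfin⟩
    obtain ⟨xs, hx, hxs⟩ := exists_factorization_orliczModular_le hφ' hθ hθsum hφz.1 hinv x hρ
    exact ⟨xs, fun j => ⟨ρ, hρ, (hxs j).trans_lt hfin⟩, hx⟩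
end
end

section
/- Let φ²(t) = 5^{−2} e^{−2+2√(1−t)} (2t + 2√(1−t) − 2)² for t ∈ (0,1] and φ²(0) = 0. Then there exists t₀ ∈ (0,1) such that φ² is convex and strictly increasing on [0, t₀], and there exists C > 0 such that φ²(2t) ≤ C φ²(t) for all t ∈ (0, t₀/2] (i.e. φ² satisfies the Δ₂-condition at 0). -/
/-!
Substitute `s = √(1 - t)`, so that `t = 1 - s²` and `2t + 2s - 2 = 2s(1 - s)`; then
`φ²(1 - s²) = (4/25) e^{2(s-1)} s² (1 - s)²`. Differentiating in `t` gives
`(φ²)' = (4/25) e^{2(s-1)} (1 - s)(s - t)` and `(φ²)'' = (2/25) e^{2(s-1)} (3s - 2 - 2t)`, which are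
positive resp. nonnegative on `(0, 1/4)`. Since `t² = (1 - s)² (1 + s)²` and `1/√2 ≤ s ≤ 1` for
`t ≤ 1/2`, the function is comparable to `t²` there: `e⁻² t²/50 ≤ φ²(t) ≤ t²/25`, which gives the
`Δ₂`-condition with `C = 8e²`.
-/

open Real Set

noncomputable section

/-- `φ²(t) = 5⁻² e^{-2+2√(1-t)} (2t + 2√(1-t) - 2)²` (with `φ²(0) = 0`). -/
def phi2 (t : ℝ) : ℝ :=
  (5 : ℝ) ^ (-2 : ℤ) * Real.exp (-2 + 2 * Real.sqrt (1 - t)) *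
    (2 * t + 2 * Real.sqrt (1 - t) - 2) ^ 2

def phi2Deriv (t : ℝ) : ℝ :=
  4 / 25 * exp (-2 + 2 * √(1 - t)) * ((1 - √(1 - t)) * (√(1 - t) - t))

def phi2Deriv2 (t : ℝ) : ℝ :=
  2 / 25 * exp (-2 + 2 * √(1 - t)) * (3 * √(1 - t) - 2 - 2 * t)

lemma sqrt_one_sub_one_sub_sq {s : ℝ} (hs : 0 ≤ s) : √(1 - (1 - s ^ 2)) = s := by
  rw [sub_sub_cancel, sqrt_sq hs]

lemma exists_eq_one_sub_sq {t : ℝ} (h0 : 0 ≤ t) (h1 : t ≤ 1) :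
    ∃ s, 0 ≤ s ∧ s ≤ 1 ∧ t = 1 - s ^ 2 :=
  ⟨√(1 - t), sqrt_nonneg _, sqrt_le_one.mpr (by linarith), by rw [sq_sqrt (by linarith)]; ring⟩

lemma phi2_one_sub_sq {s : ℝ} (hs : 0 ≤ s) :
    phi2 (1 - s ^ 2) = 4 / 25 * exp (2 * (s - 1)) * (s * (1 - s)) ^ 2 := by
  rw [phi2, sqrt_one_sub_one_sub_sq hs]
  ring_nf

lemma hasDerivAt_sqrt_one_sub {t : ℝ} (ht : t < 1) :
    HasDerivAt (fun t ↦ √(1 - t)) (-1 / (2 * √(1 - t))) t :=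
  ((hasDerivAt_id t).const_sub 1).sqrt (by simp; linarith)

lemma hasDerivAt_phi2 {t : ℝ} (ht : t < 1) : HasDerivAt phi2 (phi2Deriv t) t := by
  have hs := hasDerivAt_sqrt_one_sub ht
  have h : HasDerivAt phi2 _ t :=
    (((hs.const_mul 2).const_add (-2)).exp.const_mul ((5 : ℝ) ^ (-2 : ℤ))).mul
      (((((hasDerivAt_id t).const_mul 2).add (hs.const_mul 2)).sub_const 2).pow 2)
  refine h.congr_deriv ?_
  have hpos : 0 < √(1 - t) := sqrt_pos.mpr (by linarith)
  have hsq : √(1 - t) ^ 2 = 1 - t := sq_sqrt (by linarith)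
  simp only [phi2Deriv, Pi.add_apply, id]
  generalize √(1 - t) = s at hpos hsq ⊢
  obtain rfl : t = 1 - s ^ 2 := by linarith
  field_simp
  ring

lemma hasDerivAt_phi2Deriv {t : ℝ} (ht : t < 1) : HasDerivAt phi2Deriv (phi2Deriv2 t) t := by
  have hs := hasDerivAt_sqrt_one_sub ht
  have h : HasDerivAt phi2Deriv _ t :=
    (((hs.const_mul 2).const_add (-2)).exp.const_mul (4 / 25 : ℝ)).mul
      ((hs.const_sub 1).mul (hs.sub (hasDerivAt_id t)))
  refine h.congr_deriv ?_
  have hpos : 0 < √(1 - t) := sqrt_pos.mpr (by linarith)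
  have hsq : √(1 - t) ^ 2 = 1 - t := sq_sqrt (by linarith)
  rw [phi2Deriv2]
  generalize √(1 - t) = s at hpos hsq ⊢
  obtain rfl : t = 1 - s ^ 2 := by linarith
  field_simp
  ring

lemma phi2Deriv_pos {t : ℝ} (h0 : 0 < t) (h1 : t ≤ 1 / 2) : 0 < phi2Deriv t := by
  obtain ⟨s, hs0, hs1, rfl⟩ := exists_eq_one_sub_sq h0.le (by linarith)
  rw [phi2Deriv, sqrt_one_sub_one_sub_sq hs0]
  have hs_lt_one : 0 < 1 - s := by nlinarith
  have hs_gt_t : 0 < s - (1 - s ^ 2) := by nlinarith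
  exact mul_pos (by positivity) (mul_pos hs_lt_one hs_gt_t)

lemma phi2Deriv2_nonneg {t : ℝ} (h0 : 0 ≤ t) (h1 : t ≤ 1 / 4) : 0 ≤ phi2Deriv2 t := by
  obtain ⟨s, hs0, hs1, rfl⟩ := exists_eq_one_sub_sq h0 (by linarith)
  rw [phi2Deriv2, sqrt_one_sub_one_sub_sq hs0]
  have hs : 0 ≤ 3 * s - 2 - 2 * (1 - s ^ 2) := by nlinarith
  exact mul_nonneg (by positivity) hs

lemma continuous_phi2 : Continuous phi2 := by
  unfold phi2
  fun_prop

lemma convexOn_phi2 : ConvexOn ℝ (Icc 0 (1 / 4)) phi2 := by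
  refine convexOn_of_hasDerivWithinAt2_nonneg (f' := phi2Deriv) (f'' := phi2Deriv2)
    (convex_Icc _ _) continuous_phi2.continuousOn ?_ ?_ ?_ <;>
    intro x hx <;> rw [interior_Icc] at hx
  · exact (hasDerivAt_phi2 (by linarith [hx.2])).hasDerivWithinAt
  · exact (hasDerivAt_phi2Deriv (by linarith [hx.2])).hasDerivWithinAt
  · exact phi2Deriv2_nonneg hx.1.le hx.2.le

lemma strictMonoOn_phi2 : StrictMonoOn phi2 (Icc 0 (1 / 4)) := by
  refine strictMonoOn_of_hasDerivWithinAt_pos (f' := phi2Deriv)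
    (convex_Icc _ _) continuous_phi2.continuousOn ?_ ?_ <;>
    intro x hx <;> rw [interior_Icc] at hx
  · exact (hasDerivAt_phi2 (by linarith [hx.2])).hasDerivWithinAt
  · exact phi2Deriv_pos hx.1 (by linarith [hx.2])

lemma phi2_le_sq {t : ℝ} (h0 : 0 ≤ t) (h1 : t ≤ 1) : phi2 t ≤ t ^ 2 / 25 := by
  obtain ⟨s, hs0, hs1, rfl⟩ := exists_eq_one_sub_sq h0 h1
  rw [phi2_one_sub_sq hs0]
  have hexp : exp (2 * (s - 1)) ≤ 1 := exp_le_one_iff.mpr (by linarith)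
  have hsq : 4 * (s * (1 - s)) ^ 2 ≤ (1 - s ^ 2) ^ 2 := by
    nlinarith [mul_nonneg (sq_nonneg (1 - s))
      (mul_nonneg (sub_nonneg.2 hs1) (by linarith : 0 ≤ 1 + 3 * s))]
  calc 4 / 25 * exp (2 * (s - 1)) * (s * (1 - s)) ^ 2 ≤ 4 / 25 * 1 * (s * (1 - s)) ^ 2 := by
        gcongr
    _ ≤ (1 - s ^ 2) ^ 2 / 25 := by linarith

lemma exp_neg_two_mul_sq_le_phi2 {t : ℝ} (h0 : 0 ≤ t) (h1 : t ≤ 1 / 2) :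
    exp (-2) / 50 * t ^ 2 ≤ phi2 t := by
  obtain ⟨s, hs0, hs1, rfl⟩ := exists_eq_one_sub_sq h0 (by linarith)
  rw [phi2_one_sub_sq hs0]
  have hexp : exp (-2) ≤ exp (2 * (s - 1)) := exp_le_exp.mpr (by linarith)
  have hsq : (1 - s ^ 2) ^ 2 ≤ 8 * (s * (1 - s)) ^ 2 := by
    nlinarith [mul_nonneg (sq_nonneg (1 - s)) (by nlinarith : (0 : ℝ) ≤ 7 * s ^ 2 - 2 * s - 1)]
  calc exp (-2) / 50 * (1 - s ^ 2) ^ 2 ≤ exp (-2) / 50 * (8 * (s * (1 - s)) ^ 2) := by gcongr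
    _ = 4 / 25 * exp (-2) * (s * (1 - s)) ^ 2 := by ring
    _ ≤ 4 / 25 * exp (2 * (s - 1)) * (s * (1 - s)) ^ 2 := by gcongr

lemma phi2_two_mul_le {t : ℝ} (h0 : 0 ≤ t) (h1 : t ≤ 1 / 2) :
    phi2 (2 * t) ≤ 8 * exp 2 * phi2 t :=
  calc phi2 (2 * t) ≤ (2 * t) ^ 2 / 25 := phi2_le_sq (by positivity) (by linarith)
    _ = 8 * exp 2 * (exp (-2) / 50 * t ^ 2) := by
        rw [exp_neg]; field_simp; ring
    _ ≤ 8 * exp 2 * phi2 t := by gcongr; exact exp_neg_two_mul_sq_le_phi2 h0 h1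

/-- On a neighborhood of `0`, `φ²` is a nondegenerate Orlicz function (convex and
strictly increasing) satisfying the `Δ₂`-condition at `0`. -/
theorem statement18 : ∃ t₀ : ℝ, 0 < t₀ ∧ t₀ < 1 ∧
    ConvexOn ℝ (Set.Icc 0 t₀) phi2 ∧ StrictMonoOn phi2 (Set.Icc 0 t₀) ∧
    ∃ C : ℝ, 0 < C ∧ ∀ t : ℝ, 0 < t → t ≤ t₀ / 2 → phi2 (2 * t) ≤ C * phi2 t :=
  ⟨1 / 4, by norm_num, by norm_num, convexOn_phi2, strictMonoOn_phi2, 8 * exp 2, by positivity,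
    fun _ ht0 ht ↦ phi2_two_mul_le ht0.le (by linarith)⟩
end
end
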